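/- Let (V,d) be a finite metric space with distinct pairwise distances, and let v_0,...,v_{n-1} be its NUV order from v_0 with step lengths D(v_i) = d(v_i,v_{i+1}) (D(v_{n-1})=0). For r > 0, let N(r) denote the minimal cardinality of a subset S ⊆ V such that every point of V is within distance r of S. Then the number of points w ∈ V with D(w) > 2r is at most N(r). -/
import Mathlib


/-- The length `D(v_i)` of the step taken from the `i`-th visited point
(`0` from the last point). -/
noncomputable def stepLen {V : Type*} [MetricSpace V] {n : ℕ} (e : Fin n → V) (i : Fin n) : ℝ :=
  if h : i.val + 1 < n then dist (e i) (e ⟨i.val + 1, h⟩) else 0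

/-- `e` is a nearest-unvisited-vertex (greedy) order. -/
def IsNUV {V : Type*} [MetricSpace V] {n : ℕ} (e : Fin n → V) : Prop :=
  ∀ i j : Fin n, i < j → stepLen e i ≤ dist (e i) (e j)

/-- All pairwise distances between distinct points are distinct. -/
def DistinctDistances (V : Type*) [MetricSpace V] : Prop :=
  ∀ a b c d : V, a ≠ b → c ≠ d → dist a b = dist c d → (a = c ∧ b = d) ∨ (a = d ∧ b = c)

/-- Equation (3): the number of points with NUV step length exceeding `2r` is at most the
cardinality of any `r`-covering set, hence at most the covering number `N(r)`. -/
theorem stmt2 {V : Type*} [MetricSpace V] [Fintype V] {n : ℕ} (hcard : Fintype.card V = n)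
    (hd : DistinctDistances V) (e : Fin n ≃ V) (hNUV : IsNUV (⇑e))
    (r : ℝ) (hr : 0 < r)
    (S : Finset V) (hS : ∀ v : V, ∃ s ∈ S, dist v s ≤ r) :
    Set.ncard {i : Fin n | 2 * r < stepLen (⇑e) i} ≤ S.card := by
  classical
  set T : Finset (Fin n) := Finset.univ.filter (fun i => 2 * r < stepLen (⇑e) i) with hT
  have hset : {i : Fin n | 2 * r < stepLen (⇑e) i} = ↑T := by
    ext i; simp [hT]
  rw [hset, Set.ncard_coe_finset]
  have hmem : ∀ i : Fin n, i ∈ T → 2 * r < stepLen (⇑e) i := by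
    intro i hi; simpa [hT] using hi
  choose f hfS hfd using fun i : Fin n => hS (e i)
  apply Finset.card_le_card_of_injOn f (fun i _ => hfS i)
  intro i hi j hj hfij
  by_contra hne
  rcases lt_or_gt_of_ne hne with h | h
  · have : stepLen (⇑e) i ≤ dist (e i) (e j) := hNUV i j h
    have hd2 : dist (e i) (e j) ≤ 2 * r := by
      calc dist (e i) (e j) ≤ dist (e i) (f i) + dist (f i) (e j) := dist_triangle _ _ _
        _ ≤ r + r := add_le_add (hfd i) (by rw [hfij, dist_comm]; exact hfd j)
        _ = 2 * r := by ring
    exact absurd (this.trans hd2) (not_le.mpr (hmem i hi))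
  · have : stepLen (⇑e) j ≤ dist (e j) (e i) := hNUV j i h
    have hd2 : dist (e j) (e i) ≤ 2 * r := by
      calc dist (e j) (e i) ≤ dist (e j) (f j) + dist (f j) (e i) := dist_triangle _ _ _
        _ ≤ r + r := add_le_add (hfd j) (by rw [← hfij, dist_comm]; exact hfd i)
        _ = 2 * r := by ring
    exact absurd (this.trans hd2) (not_le.mpr (hmem j hj))
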